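/- Let n' be a positive integer with 3 ∤ n', set n = 3n' and D = −27n'², and let (x₀, y₀) be a rational point on y² = 4x³ − 27D with x₀ ≠ 0. Then the 3-adic valuation v₃((y₀ − 9n)/(y₀ + 9n)) = v₃((y₀ − 27n')/(y₀ + 27n')) is divisible by 3. -/

import Mathlib

/-!
Put `a = y₀ - 27n'` and `b = y₀ + 27n'`. The curve equation says `a * b = 4 x₀³`, so
`v₃ a + v₃ b ≡ 0 (mod 3)`, while `a - b = -2·3³·n'` has valuation exactly `3`. By the
ultrametric property either `v₃ a = v₃ b`, or `min (v₃ a) (v₃ b) = 3`; in the latter case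
`v₃ a - v₃ b = ±(v₃ a + v₃ b - 6)`. Either way `3 ∣ v₃ a - v₃ b = v₃ (a / b)`.
-/

namespace padicValRat

variable {p : ℕ} [Fact p.Prime]

theorem sub_eq_min {a b : ℚ} (ha : a ≠ 0) (hb : b ≠ 0)
    (hval : padicValRat p a ≠ padicValRat p b) :
    padicValRat p (a - b) = min (padicValRat p a) (padicValRat p b) := by
  have hab : a + -b ≠ 0 := fun h => hval (by rw [add_neg_eq_zero.mp h])
  rw [sub_eq_add_neg, add_eq_min hab ha (neg_ne_zero.mpr hb) (by rwa [padicValRat.neg]),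
    padicValRat.neg]

theorem prime_pow_mul_of_not_dvd {m : ℕ} (hm : ¬p ∣ m) (k : ℕ) :
    padicValRat p ((p : ℚ) ^ k * m) = k := by
  have hm0 : (m : ℚ) ≠ 0 := Nat.cast_ne_zero.mpr (by rintro rfl; exact hm (dvd_zero p))
  rw [padicValRat.mul (by simp [(Fact.out : p.Prime).ne_zero]) hm0, padicValRat.pow,
    padicValRat.self (Fact.out : p.Prime).one_lt, padicValRat.of_nat,
    padicValNat.eq_zero_of_not_dvd hm]
  simp

theorem dvd_natCast_mul_pow {c : ℕ} (hc : ¬p ∣ c) (x : ℚ) (k : ℕ) :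
    (k : ℤ) ∣ padicValRat p (c * x ^ k) := by
  have hc0 : (c : ℚ) ≠ 0 := Nat.cast_ne_zero.mpr (by rintro rfl; exact hc (dvd_zero p))
  obtain rfl | hx := eq_or_ne x 0
  · rcases k with _ | k <;> simp [padicValNat.eq_zero_of_not_dvd hc]
  rw [padicValRat.mul hc0 (pow_ne_zero k hx), padicValRat.pow, padicValRat.of_nat,
    padicValNat.eq_zero_of_not_dvd hc]
  simp

theorem dvd_div_of_dvd_mul_of_dvd_two_mul_sub {m : ℤ} {a b : ℚ}
    (hmul : m ∣ padicValRat p (a * b)) (hsub : m ∣ 2 * padicValRat p (a - b)) :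
    m ∣ padicValRat p (a / b) := by
  obtain rfl | ha := eq_or_ne a 0
  · simp
  obtain rfl | hb := eq_or_ne b 0
  · simp
  rw [padicValRat.mul ha hb] at hmul
  rw [padicValRat.div ha hb]
  by_cases hval : padicValRat p a = padicValRat p b
  · simp [hval]
  rw [sub_eq_min ha hb hval] at hsub
  rcases min_cases (padicValRat p a) (padicValRat p b) with ⟨hmin, -⟩ | ⟨hmin, -⟩ <;>
    rw [hmin] at hsub
  · rw [show padicValRat p a - padicValRat p b
        = 2 * padicValRat p a - (padicValRat p a + padicValRat p b) by ring]
    exact dvd_sub hsub hmul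
  · rw [show padicValRat p a - padicValRat p b
        = padicValRat p a + padicValRat p b - 2 * padicValRat p b by ring]
    exact dvd_sub hmul hsub

end padicValRat

theorem three_adic_valuation_divisible_general (n' : ℕ) (h3 : ¬(3 ∣ n'))
    (x₀ y₀ : ℚ)
    (hE : y₀ ^ 2 = 4 * x₀ ^ 3 + 729 * (n' : ℚ) ^ 2) :
    (3 : ℤ) ∣ padicValRat 3 ((y₀ - 27 * n') / (y₀ + 27 * n')) := by
  have hmul : (y₀ - 27 * n') * (y₀ + 27 * n') = ((4 : ℕ) : ℚ) * x₀ ^ 3 := by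
    push_cast; linear_combination hE
  have hsub : y₀ - 27 * n' - (y₀ + 27 * n') = -(((3 : ℕ) : ℚ) ^ 3 * ((2 * n' : ℕ) : ℚ)) := by
    push_cast; ring
  apply padicValRat.dvd_div_of_dvd_mul_of_dvd_two_mul_sub
  · rw [hmul]
    exact_mod_cast padicValRat.dvd_natCast_mul_pow (by norm_num) x₀ 3
  · rw [hsub, padicValRat.neg, padicValRat.prime_pow_mul_of_not_dvd (by omega)]
    norm_num

/-- Let `n'` be a positive integer with `3 ∤ n'`, set `n = 3n'` and `D = −27n'²`,
and let `(x₀, y₀)` be a rational point on `y² = 4x³ − 27D = 4x³ + 729n'²` with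
`x₀ ≠ 0`.  Then the 3-adic valuation of
`(y₀ − 9n)/(y₀ + 9n) = (y₀ − 27n')/(y₀ + 27n')` is divisible by 3. -/
theorem three_adic_valuation_divisible (n' : ℕ) (hn' : 0 < n') (h3 : ¬(3 ∣ n'))
    (x₀ y₀ : ℚ)
    (hE : y₀ ^ 2 = 4 * x₀ ^ 3 + 729 * (n' : ℚ) ^ 2) (hx₀ : x₀ ≠ 0) :
    (3 : ℤ) ∣ padicValRat 3 ((y₀ - 27 * n') / (y₀ + 27 * n')) :=
  three_adic_valuation_divisible_general n' h3 x₀ y₀ hE
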